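/- arXiv:1305.2385 — 5 statements merged into one kernel-verified Lean document; each statement's English description precedes it below -/
import Mathlib

section
/- The set S₁° of trace-one entanglement witnesses is bounded: there exists a constant C ≥ 0 such that every Hermitian matrix Ω with trace 1 satisfying f_Ω(φ,χ) ≥ 0 for all φ, χ has Frobenius norm ‖Ω‖ ≤ C. -/
open Matrix
open scoped ComplexOrder

noncomputable section

namespace EW

/-- Complex square matrices indexed by `Fin Na × Fin Nb`. -/
abbrev Mat (Na Nb : ℕ) := Matrix (Fin Na × Fin Nb) (Fin Na × Fin Nb) ℂ

/-- Kronecker product of vectors: `(φ⊗χ)_(i,j) = φ_i · χ_j`. -/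
def kron {Na Nb : ℕ} (φ : Fin Na → ℂ) (χ : Fin Nb → ℂ) : Fin Na × Fin Nb → ℂ :=
  fun p => φ p.1 * χ p.2

/-- Sesquilinear pairing `xᴴ A y`. -/
def pair {n : Type*} [Fintype n] (A : Matrix n n ℂ) (x y : n → ℂ) : ℂ :=
  star x ⬝ᵥ A.mulVec y

/-- The biquadratic form `f_A(φ,χ) = (φ⊗χ)ᴴ A (φ⊗χ)`. -/
def biquad {Na Nb : ℕ} (A : Mat Na Nb) (φ : Fin Na → ℂ) (χ : Fin Nb → ℂ) : ℂ :=
  pair A (kron φ χ) (kron φ χ)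

/-- An entanglement witness: a Hermitian matrix whose biquadratic form is nonnegative. -/
def IsWitness {Na Nb : ℕ} (A : Mat Na Nb) : Prop :=
  A.IsHermitian ∧ ∀ φ χ, 0 ≤ biquad A φ χ

/-- `S₁°`, the set of trace-one entanglement witnesses. -/
def witnessSet (Na Nb : ℕ) : Set (Mat Na Nb) :=
  { Ω | IsWitness Ω ∧ Ω.trace = 1 }

/-- A zero of a witness: a pair of nonzero vectors where the biquadratic form vanishes. -/
def IsZeroOf {Na Nb : ℕ} (Ω : Mat Na Nb) (φ₀ : Fin Na → ℂ) (χ₀ : Fin Nb → ℂ) : Prop :=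
  φ₀ ≠ 0 ∧ χ₀ ≠ 0 ∧ biquad Ω φ₀ χ₀ = 0

/-- The Hessian form
`H_A(φ₀,χ₀;ξ,ζ) = Re[(ξ⊗χ₀)ᴴA(ξ⊗χ₀) + (φ₀⊗ζ)ᴴA(φ₀⊗ζ) + 2(φ₀⊗ζ)ᴴA(ξ⊗χ₀) + 2(φ₀⊗χ₀)ᴴA(ξ⊗ζ)]`. -/
def hessForm {Na Nb : ℕ} (A : Mat Na Nb) (φ₀ : Fin Na → ℂ) (χ₀ : Fin Nb → ℂ)
    (ξ : Fin Na → ℂ) (ζ : Fin Nb → ℂ) : ℝ :=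
  (pair A (kron ξ χ₀) (kron ξ χ₀) + pair A (kron φ₀ ζ) (kron φ₀ ζ)
    + 2 * pair A (kron φ₀ ζ) (kron ξ χ₀) + 2 * pair A (kron φ₀ χ₀) (kron ξ ζ)).re

/-- A Hessian zero of `Ω` at the zero `(φ₀,χ₀)`. -/
def IsHessianZeroAt {Na Nb : ℕ} (Ω : Mat Na Nb) (φ₀ : Fin Na → ℂ) (χ₀ : Fin Nb → ℂ)
    (ξ : Fin Na → ℂ) (ζ : Fin Nb → ℂ) : Prop :=
  (ξ, ζ) ≠ (0, 0) ∧ star φ₀ ⬝ᵥ ξ = 0 ∧ star χ₀ ⬝ᵥ ζ = 0 ∧ hessForm Ω φ₀ χ₀ ξ ζ = 0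

/-- A quadratic witness: a witness all of whose zeros have no Hessian zeros. -/
def IsQuadraticWitness {Na Nb : ℕ} (Ω : Mat Na Nb) : Prop :=
  IsWitness Ω ∧ ∀ φ₀ χ₀, IsZeroOf Ω φ₀ χ₀ → ∀ ξ ζ, ¬ IsHessianZeroAt Ω φ₀ χ₀ ξ ζ

/-- Partial transpose with respect to the second factor. -/
def ptrans {Na Nb : ℕ} (A : Mat Na Nb) : Mat Na Nb :=
  fun p q => A (p.1, q.2) (q.1, p.2)

/-- Euclidean norm of a complex vector. -/
def enorm {n : Type*} [Fintype n] (x : n → ℂ) : ℝ :=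
  Real.sqrt (star x ⬝ᵥ x).re

/-- Frobenius norm of a matrix. -/
def frobNorm {Na Nb : ℕ} (A : Mat Na Nb) : ℝ :=
  Real.sqrt (∑ i, ∑ j, ‖A i j‖ ^ 2)

/-- `S₁`, the set of separable states: the convex hull of normalized pure product states. -/
def sepSet (Na Nb : ℕ) : Set (Mat Na Nb) :=
  convexHull ℝ { M | ∃ (φ : Fin Na → ℂ) (χ : Fin Nb → ℂ), enorm (kron φ χ) = 1 ∧
    M = Matrix.vecMulVec (kron φ χ) (star (kron φ χ)) }

/-- `Γ` satisfies the constraint system of the witness `Ω`. -/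
def SatisfiesConstraints {Na Nb : ℕ} (Ω Γ : Mat Na Nb) : Prop :=
  (∀ φ₀ χ₀, IsZeroOf Ω φ₀ χ₀ →
    (∀ φ, pair Γ (kron φ χ₀) (kron φ₀ χ₀) = 0) ∧
    (∀ χ, pair Γ (kron φ₀ χ) (kron φ₀ χ₀) = 0)) ∧
  (∀ φ₀ χ₀, IsZeroOf Ω φ₀ χ₀ → ∀ ξ ζ, IsHessianZeroAt Ω φ₀ χ₀ ξ ζ →
    ∀ ξ' ζ', star φ₀ ⬝ᵥ ξ' = 0 → star χ₀ ⬝ᵥ ζ' = 0 →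
      hessForm Γ φ₀ χ₀ (ξ + ξ') (ζ + ζ') =
        hessForm Γ φ₀ χ₀ ξ ζ + hessForm Γ φ₀ χ₀ ξ' ζ') ∧
  (∀ φ₀ χ₀, IsZeroOf Ω φ₀ χ₀ → ∀ ξ ζ, IsHessianZeroAt Ω φ₀ χ₀ ξ ζ →
    (pair Γ (kron φ₀ ζ) (kron ξ ζ) + pair Γ (kron ξ χ₀) (kron ξ ζ)).re = 0)

end EW

namespace EW

variable {Na Nb : ℕ}

lemma pair_add_left' {n : Type*} [Fintype n] (A : Matrix n n ℂ) (x x' y : n → ℂ) :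
    pair A (x + x') y = pair A x y + pair A x' y := by
  simp [pair, add_dotProduct]

lemma pair_add_right' {n : Type*} [Fintype n] (A : Matrix n n ℂ) (x y y' : n → ℂ) :
    pair A x (y + y') = pair A x y + pair A x y' := by
  simp [pair, mulVec_add, dotProduct_add]

lemma pair_smul_left' {n : Type*} [Fintype n] (A : Matrix n n ℂ) (c : ℂ) (x y : n → ℂ) :
    pair A (c • x) y = (starRingEnd ℂ) c * pair A x y := by
  simp [pair, star_smul, smul_dotProduct]

lemma pair_smul_right' {n : Type*} [Fintype n] (A : Matrix n n ℂ) (c : ℂ) (x y : n → ℂ) :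
    pair A x (c • y) = c * pair A x y := by
  simp [pair, mulVec_smul, dotProduct_smul]

lemma pair_single_single' {n : Type*} [Fintype n] [DecidableEq n] (A : Matrix n n ℂ) (p q : n) :
    pair A (Pi.single p 1) (Pi.single q 1) = A p q := by
  simp [pair, dotProduct, mulVec, Pi.single_apply, apply_ite, Finset.sum_ite_eq]

lemma kron_expand' (i k : Fin Na) (j l : Fin Nb) (a b : ℂ) :
    kron ((Pi.single i 1 : Fin Na → ℂ) + a • (Pi.single k 1 : Fin Na → ℂ))
      ((Pi.single j 1 : Fin Nb → ℂ) + b • (Pi.single l 1 : Fin Nb → ℂ))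
    = (Pi.single (i,j) 1 : Fin Na × Fin Nb → ℂ) + b • (Pi.single (i,l) 1 : Fin Na × Fin Nb → ℂ)
      + a • (Pi.single (k,j) 1 : Fin Na × Fin Nb → ℂ)
      + (a*b) • (Pi.single (k,l) 1 : Fin Na × Fin Nb → ℂ) := by
  funext p
  simp [kron, Pi.single_apply, Prod.ext_iff]
  split_ifs <;> simp_all <;> ring

lemma biquad_expand' (A : Mat Na Nb) (i k : Fin Na) (j l : Fin Nb) (a b : ℂ) :
    biquad A ((Pi.single i 1 : Fin Na → ℂ) + a • (Pi.single k 1 : Fin Na → ℂ))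
      ((Pi.single j 1 : Fin Nb → ℂ) + b • (Pi.single l 1 : Fin Nb → ℂ))
    = A (i,j) (i,j) + b * A (i,j) (i,l) + a * A (i,j) (k,j) + a * b * A (i,j) (k,l)
      + (starRingEnd ℂ) b * (A (i,l) (i,j) + b * A (i,l) (i,l) + a * A (i,l) (k,j) + a * b * A (i,l) (k,l))
      + (starRingEnd ℂ) a * (A (k,j) (i,j) + b * A (k,j) (i,l) + a * A (k,j) (k,j) + a * b * A (k,j) (k,l))
      + (starRingEnd ℂ) a * (starRingEnd ℂ) b *
        (A (k,l) (i,j) + b * A (k,l) (i,l) + a * A (k,l) (k,j) + a * b * A (k,l) (k,l)) := by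
  rw [biquad, kron_expand']
  simp only [pair_add_left', pair_add_right', pair_smul_left', pair_smul_right',
    pair_single_single', _root_.map_mul]
  ring

lemma biquad_single' (A : Mat Na Nb) (i : Fin Na) (j : Fin Nb) :
    biquad A (Pi.single i 1) (Pi.single j 1) = A (i,j) (i,j) := by
  have h : kron (Pi.single i (1:ℂ)) (Pi.single j (1:ℂ)) = Pi.single (i,j) 1 := by
    funext p
    simp [kron, Pi.single_apply, Prod.ext_iff]
    split_ifs <;> simp_all
  rw [biquad, h, pair_single_single']

/-- The norm of a nonnegative complex number equals its real part. -/
lemma norm_eq_re_of_nonneg' {z : ℂ} (hz : 0 ≤ z) : ‖z‖ = z.re := by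
  rw [Complex.le_def] at hz
  have : z = (z.re : ℂ) := by
    apply Complex.ext <;> simp [← hz.2]
  rw [this, Complex.norm_real, Real.norm_of_nonneg (by simpa using hz.1)]
  simp

/-- Every entry of a trace-one witness is bounded by `4` in modulus. -/
lemma entry_bound' (Ω : Mat Na Nb) (hΩ : Ω ∈ witnessSet Na Nb) (p q : Fin Na × Fin Nb) :
    ‖Ω p q‖ ≤ 4 := by
  obtain ⟨⟨_, hpos⟩, htr⟩ := hΩ
  obtain ⟨i, j⟩ := p
  obtain ⟨k, l⟩ := q
  have hdiag : ∀ r : Fin Na × Fin Nb, 0 ≤ (Ω r r).re ∧ (Ω r r).im = 0 := by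
    intro r
    have h := hpos (Pi.single r.1 1) (Pi.single r.2 1)
    rw [biquad_single'] at h
    rw [Complex.le_def] at h
    exact ⟨by simpa using h.1, by simpa using h.2.symm⟩
  have hsum : ∑ r : Fin Na × Fin Nb, (Ω r r).re = 1 := by
    have : (Ω.trace).re = 1 := by rw [htr]; simp
    rw [Matrix.trace] at this
    simpa [Matrix.diag, Complex.re_sum] using this
  have hdle : ∀ r : Fin Na × Fin Nb, (Ω r r).re ≤ 1 := by
    intro r
    rw [← hsum]
    exact Finset.single_le_sum (fun r _ => (hdiag r).1) (Finset.mem_univ r)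
  set E : ℂ → ℂ → ℂ := fun a b =>
    biquad Ω ((Pi.single i 1 : Fin Na → ℂ) + a • (Pi.single k 1 : Fin Na → ℂ))
      ((Pi.single j 1 : Fin Nb → ℂ) + b • (Pi.single l 1 : Fin Nb → ℂ)) with hE
  set w : Fin 4 → ℂ := ![1, Complex.I, -1, -Complex.I] with hw
  have hwnorm : ∀ s, ‖w s‖ = 1 := by
    intro s; fin_cases s <;> simp [hw]
  have h1 : ∑ s : Fin 4, ∑ t : Fin 4, (starRingEnd ℂ) (w s * w t) * E (w s) (w t)
      = 16 * Ω (i,j) (k,l) := by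
    simp only [hE, biquad_expand', hw, Fin.sum_univ_four, Matrix.cons_val_zero,
      Matrix.cons_val_one, Matrix.head_cons, Matrix.cons_val_two, Matrix.tail_cons,
      Matrix.cons_val_three, _root_.map_mul, _root_.map_one, _root_.map_neg, Complex.conj_I]
    ring_nf
    simp [Complex.I_sq, pow_succ]
    ring
  have h2 : ∑ s : Fin 4, ∑ t : Fin 4, E (w s) (w t)
      = 16 * (Ω (i,j) (i,j) + Ω (i,l) (i,l) + Ω (k,j) (k,j) + Ω (k,l) (k,l)) := by
    simp only [hE, biquad_expand', hw, Fin.sum_univ_four, Matrix.cons_val_zero,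
      Matrix.cons_val_one, Matrix.head_cons, Matrix.cons_val_two, Matrix.tail_cons,
      Matrix.cons_val_three, _root_.map_mul, _root_.map_one, _root_.map_neg, Complex.conj_I]
    ring_nf
    simp [Complex.I_sq, pow_succ]
    ring
  have hEpos : ∀ a b, 0 ≤ E a b := fun a b => hpos _ _
  have hnb : ‖(16 : ℂ) * Ω (i,j) (k,l)‖ ≤
      ∑ s : Fin 4, ∑ t : Fin 4, (E (w s) (w t)).re := by
    rw [← h1]
    refine (norm_sum_le _ _).trans ?_
    refine Finset.sum_le_sum fun s _ => ?_
    refine (norm_sum_le _ _).trans ?_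
    refine Finset.sum_le_sum fun t _ => ?_
    rw [norm_mul, ← norm_eq_re_of_nonneg' (hEpos (w s) (w t))]
    have : ‖(starRingEnd ℂ) (w s * w t)‖ = 1 := by
      rw [RCLike.norm_conj, norm_mul, hwnorm, hwnorm, mul_one]
    rw [this, one_mul]
  have hre : ∑ s : Fin 4, ∑ t : Fin 4, (E (w s) (w t)).re
      = (16 : ℝ) * ((Ω (i,j) (i,j)).re + (Ω (i,l) (i,l)).re + (Ω (k,j) (k,j)).re
        + (Ω (k,l) (k,l)).re) := by
    have := congrArg Complex.re h2
    simpa [Complex.re_sum] using this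
  have hfinal : ‖(16 : ℂ) * Ω (i,j) (k,l)‖ ≤ 16 * 4 := by
    refine hnb.trans ?_
    rw [hre]
    have b1 := hdle (i,j); have b2 := hdle (i,l); have b3 := hdle (k,j); have b4 := hdle (k,l)
    nlinarith
  rw [norm_mul] at hfinal
  simp only [Complex.norm_ofNat] at hfinal
  linarith

end EW


open EW
theorem witness_set_bounded (Na Nb : ℕ) (hNa : 1 ≤ Na) (hNb : 1 ≤ Nb) :
    ∃ C : ℝ, 0 ≤ C ∧ ∀ Ω : Mat Na Nb, Ω ∈ witnessSet Na Nb → frobNorm Ω ≤ C := by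
  refine ⟨4 * Na * Nb, by positivity, fun Ω hΩ => ?_⟩
  have hent : ∀ p q, ‖Ω p q‖ ≤ 4 := entry_bound' Ω hΩ
  have hb : ∑ p : Fin Na × Fin Nb, ∑ q : Fin Na × Fin Nb, ‖Ω p q‖ ^ 2
      ≤ ((4:ℝ) * Na * Nb) ^ 2 := by
    have h16 : ∀ p q : Fin Na × Fin Nb, ‖Ω p q‖ ^ 2 ≤ 16 := by
      intro p q
      have := pow_le_pow_left₀ (norm_nonneg _) (hent p q) 2
      norm_num at this ⊢
      linarith
    calc ∑ p : Fin Na × Fin Nb, ∑ q : Fin Na × Fin Nb, ‖Ω p q‖ ^ 2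
        ≤ ∑ _p : Fin Na × Fin Nb, ∑ _q : Fin Na × Fin Nb, (16:ℝ) :=
          Finset.sum_le_sum fun p _ => Finset.sum_le_sum fun q _ => h16 p q
      _ = (Na * Nb : ℝ) * ((Na * Nb : ℝ) * 16) := by
          simp [Finset.sum_const, Finset.card_univ]
      _ = ((4:ℝ) * Na * Nb) ^ 2 := by ring
  have hs := Real.sqrt_le_sqrt hb
  rw [Real.sqrt_sq (by positivity)] at hs
  exact hs
end
end

section
/- Every nonzero entanglement witness has strictly positive trace: if Ω is a Hermitian matrix with Ω ≠ 0 and f_Ω(φ,χ) ≥ 0 for all φ, χ, then the trace of Ω is a strictly positive real number. -/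
open Matrix
open scoped ComplexOrder

noncomputable section

section Aux
open EW

lemma EW.pair_expand₂ {n : Type*} [Fintype n] (A : Matrix n n ℂ) (x x' y y' : n → ℂ) (t s : ℂ) :
    pair A (x + t • x') (y + s • y') =
      pair A x y + s * pair A x y' + star t * pair A x' y + star t * (s * pair A x' y') := by
  simp only [pair, Matrix.mulVec_add, Matrix.mulVec_smul, star_add, star_smul,
    dotProduct_add, add_dotProduct, dotProduct_smul, smul_dotProduct, smul_eq_mul]
  ring

lemma EW.pair_single {n : Type*} [Fintype n] [DecidableEq n] (A : Matrix n n ℂ) (p q : n) :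
    pair A (Pi.single p (1:ℂ)) (Pi.single q 1) = A p q := by
  simp [pair, mulVec_single, dotProduct, Pi.single_apply]

lemma EW.kron_single {Na Nb : ℕ} (i : Fin Na) (j : Fin Nb) :
    kron (Pi.single i (1:ℂ)) (Pi.single j 1) = Pi.single (i, j) 1 := by
  funext p
  by_cases h1 : p.1 = i <;> by_cases h2 : p.2 = j <;>
    simp [kron, Pi.single_apply, Prod.ext_iff, h1, h2]

lemma EW.kron_add_left {Na Nb : ℕ} (u v : Fin Na → ℂ) (χ : Fin Nb → ℂ) :
    kron (u + v) χ = kron u χ + kron v χ := by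
  funext p; simp [kron, add_mul]

lemma EW.kron_smul_left {Na Nb : ℕ} (t : ℂ) (u : Fin Na → ℂ) (χ : Fin Nb → ℂ) :
    kron (t • u) χ = t • kron u χ := by
  funext p; simp [kron, mul_assoc]

lemma EW.kron_add_right {Na Nb : ℕ} (u : Fin Na → ℂ) (χ ζ : Fin Nb → ℂ) :
    kron u (χ + ζ) = kron u χ + kron u ζ := by
  funext p; simp [kron, mul_add]

lemma EW.kron_smul_right {Na Nb : ℕ} (t : ℂ) (u : Fin Na → ℂ) (χ : Fin Nb → ℂ) :
    kron u (t • χ) = t • kron u χ := by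
  funext p; simp [kron]; ring

lemma EW.quad_aux {a b : ℂ} (h : ∀ t : ℂ, 0 ≤ t * a + star t * b) : a = 0 ∧ b = 0 := by
  have h1 := h 1; have h2 := h (-1); have h3 := h Complex.I; have h4 := h (-Complex.I)
  rw [Complex.le_def] at h1 h2 h3 h4
  simp [Complex.add_re, Complex.add_im, Complex.mul_re, Complex.mul_im] at h1 h2 h3 h4
  constructor <;> apply Complex.ext <;> simp <;>
    obtain ⟨h1a, h1b⟩ := h1 <;> obtain ⟨h2a, h2b⟩ := h2 <;>
    obtain ⟨h3a, h3b⟩ := h3 <;> obtain ⟨h4a, h4b⟩ := h4 <;> linarith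

lemma EW.zero_pair {n : Type*} [Fintype n] (A : Matrix n n ℂ) {x y : n → ℂ}
    (h : ∀ t : ℂ, 0 ≤ pair A (x + t • y) (x + t • y))
    (hx : pair A x x = 0) (hy : pair A y y = 0) :
    pair A x y = 0 ∧ pair A y x = 0 := by
  apply EW.quad_aux
  intro t
  have h' := h t
  rw [EW.pair_expand₂ A x y x y t t, hx, hy, mul_zero, mul_zero, add_zero, zero_add] at h'
  exact h'

lemma EW.zero_of_diag {Na Nb : ℕ} (Ω : Mat Na Nb)
    (hpos : ∀ φ χ, 0 ≤ biquad Ω φ χ) (hdiag : ∀ p, Ω p p = 0) : Ω = 0 := by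
  have hpos' : ∀ φ χ, 0 ≤ pair Ω (kron φ χ) (kron φ χ) := hpos
  -- Step 1: entries with the same second index vanish
  have L1 : ∀ (i i' : Fin Na) (j : Fin Nb), Ω (i, j) (i', j) = 0 := by
    intro i i' j
    have h := EW.zero_pair Ω (x := Pi.single (i, j) (1:ℂ)) (y := Pi.single (i', j) 1)
      (fun t => by
        have := hpos' ((Pi.single i 1 : Fin Na → ℂ) + t • (Pi.single i' 1 : Fin Na → ℂ)) (Pi.single j 1)
        rwa [EW.kron_add_left, EW.kron_smul_left, EW.kron_single, EW.kron_single] at this)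
      (by rw [EW.pair_single]; exact hdiag _)
      (by rw [EW.pair_single]; exact hdiag _)
    rw [EW.pair_single] at h
    exact h.1
  -- Step 2: entries with the same first index vanish
  have L2 : ∀ (i : Fin Na) (j j' : Fin Nb), Ω (i, j) (i, j') = 0 := by
    intro i j j'
    have h := EW.zero_pair Ω (x := Pi.single (i, j) (1:ℂ)) (y := Pi.single (i, j') 1)
      (fun t => by
        have := hpos' (Pi.single i 1) ((Pi.single j 1 : Fin Nb → ℂ) + t • (Pi.single j' 1 : Fin Nb → ℂ))
        rwa [EW.kron_add_right, EW.kron_smul_right, EW.kron_single, EW.kron_single] at this)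
      (by rw [EW.pair_single]; exact hdiag _)
      (by rw [EW.pair_single]; exact hdiag _)
    rw [EW.pair_single] at h
    exact h.1
  -- Step 3: all entries vanish
  have L3 : ∀ (i i' : Fin Na) (j j' : Fin Nb), Ω (i, j) (i', j') = 0 := by
    intro i i' j j'
    have key : ∀ t : ℂ, t * Ω (i, j) (i', j') + star t * Ω (i, j') (i', j) = 0 := by
      intro t
      set x : Fin Na × Fin Nb → ℂ := (Pi.single (i, j) 1 : Fin Na × Fin Nb → ℂ) + t • (Pi.single (i, j') 1 : Fin Na × Fin Nb → ℂ) with hxdef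
      set y : Fin Na × Fin Nb → ℂ := (Pi.single (i', j) 1 : Fin Na × Fin Nb → ℂ) + t • (Pi.single (i', j') 1 : Fin Na × Fin Nb → ℂ) with hydef
      have hx : pair Ω x x = 0 := by
        rw [hxdef, EW.pair_expand₂]
        simp only [EW.pair_single, hdiag, L2, mul_zero, add_zero, zero_add]
      have hy : pair Ω y y = 0 := by
        rw [hydef, EW.pair_expand₂]
        simp only [EW.pair_single, hdiag, L2, mul_zero, add_zero, zero_add]
      have hker : ∀ s : ℂ, kron ((Pi.single i 1 : Fin Na → ℂ) + s • (Pi.single i' 1 : Fin Na → ℂ))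
          ((Pi.single j 1 : Fin Nb → ℂ) + t • (Pi.single j' 1 : Fin Nb → ℂ)) = x + s • y := by
        intro s
        rw [EW.kron_add_left, EW.kron_smul_left, EW.kron_add_right, EW.kron_add_right,
          EW.kron_smul_right, EW.kron_smul_right, EW.kron_single, EW.kron_single,
          EW.kron_single, EW.kron_single, hxdef, hydef, smul_add]
      have h := EW.zero_pair Ω (x := x) (y := y)
        (fun s => by
          have := hpos' ((Pi.single i 1 : Fin Na → ℂ) + s • (Pi.single i' 1 : Fin Na → ℂ))
            ((Pi.single j 1 : Fin Nb → ℂ) + t • (Pi.single j' 1 : Fin Nb → ℂ))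
          rwa [hker s] at this)
        hx hy
      have h1 := h.1
      rw [hxdef, hydef, EW.pair_expand₂] at h1
      simp only [EW.pair_single, L1, mul_zero, add_zero, zero_add] at h1
      exact h1
    have := EW.quad_aux (a := Ω (i, j) (i', j')) (b := Ω (i, j') (i', j))
      (fun t => (key t).ge)
    exact this.1
  ext p q
  obtain ⟨i, j⟩ := p
  obtain ⟨i', j'⟩ := q
  simpa using L3 i i' j j'

end Aux

open EW
theorem witness_trace_pos (Na Nb : ℕ) (hNa : 1 ≤ Na) (hNb : 1 ≤ Nb)
    (Ω : Mat Na Nb) (hH : Ω.IsHermitian) (hne : Ω ≠ 0)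
    (hpos : ∀ φ χ, 0 ≤ biquad Ω φ χ) :
    0 < Ω.trace := by
  have hd : ∀ p : Fin Na × Fin Nb, 0 ≤ Ω p p := by
    intro p
    have := hpos (Pi.single p.1 1) (Pi.single p.2 1)
    rwa [biquad, EW.kron_single, Prod.mk.eta, EW.pair_single] at this
  have hex : ∃ p : Fin Na × Fin Nb, Ω p p ≠ 0 := by
    by_contra h
    push_neg at h
    exact hne (EW.zero_of_diag Ω hpos h)
  obtain ⟨p, hp⟩ := hex
  rw [Matrix.trace]
  exact Finset.sum_pos' (fun i _ => hd i)
    ⟨p, Finset.mem_univ p, lt_of_le_of_ne (hd p) (Ne.symm hp)⟩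
end
end

section
/- For every unit vector ψ ∈ ℂ^(Fin Na × Fin Nb), the pure state ψψᴴ is an extreme point of S₁° (in particular it is an entanglement witness of trace 1), and its partial transpose (ψψᴴ)ᴾ is also an extreme point of S₁°. -/
open Matrix
open scoped ComplexOrder

noncomputable section

/-!
If `ψψᴴ = a • Y + b • Z` with witnesses `Y, Z` and `a, b > 0`, then `f_Y` vanishes wherever
`f_{ψψᴴ}(φ, χ) = |ψᴴ(φ ⊗ χ)|²` does. For fixed `χ`, `φ ↦ f_Y(φ, χ)` is a positive semidefinite
Hermitian form whose kernel contains that of the functional `φ ↦ ψᴴ(φ ⊗ χ)`, so it equals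
`k(χ) |ψᴴ(φ ⊗ χ)|²`; symmetrically `f_Y(φ, χ) = m(φ) |ψᴴ(φ ⊗ χ)|²`. Two nonzero functionals have
a common point where neither vanishes, so all the `k(χ)` coincide and `f_Y = k f_{ψψᴴ}`;
polarization gives `Y = k ψψᴴ`, and the trace forces `k = 1`. The partial transpose is a linear involution
preserving `S₁°`, hence permutes its extreme points.
-/

namespace Matrix
variable {n : Type*} [Fintype n]

theorem IsHermitian.star_dotProduct_mulVec_comm {M : Matrix n n ℂ} (hM : M.IsHermitian)
    (x y : n → ℂ) :
    star (star x ⬝ᵥ M *ᵥ y) = star y ⬝ᵥ M *ᵥ x := by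
  rw [star_dotProduct, star_mulVec, star_star, dotProduct_mulVec, hM.eq]

theorem IsHermitian.exists_forall_star_dotProduct_mulVec_eq {M : Matrix n n ℂ}
    (hM : M.IsHermitian) {u : n → ℂ} (hker : ∀ w, star u ⬝ᵥ w = 0 → M *ᵥ w = 0) :
    ∃ k : ℂ, ∀ x, star x ⬝ᵥ M *ᵥ x = k * (star (star u ⬝ᵥ x) * (star u ⬝ᵥ x)) := by
  set s := star u ⬝ᵥ u
  by_cases hs : s = 0
  · have hu : u = 0 := dotProduct_star_self_eq_zero.mp hs
    exact ⟨0, fun x => by simp [hker x (by simp [hu])]⟩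
  set a := star u ⬝ᵥ M *ᵥ u
  refine ⟨a / (s * s), fun x => ?_⟩
  set t := (star u ⬝ᵥ x) / s
  have hs_real : star s = s := by rw [← star_dotProduct]
  have ha_real : star a = a := hM.star_dotProduct_mulVec_comm u u
  have hMx : M *ᵥ x = t • M *ᵥ u := by
    have hw : star u ⬝ᵥ (x - t • u) = 0 := by
      simp only [dotProduct_sub, dotProduct_smul, smul_eq_mul, t]
      field_simp
      ring
    rw [← sub_eq_zero, ← mulVec_smul, ← mulVec_sub, hker _ hw]
  have hux : star u ⬝ᵥ x = t * s := by simp only [t]; field_simp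
  calc star x ⬝ᵥ M *ᵥ x = t * star (t * a) := by
        rw [hMx, dotProduct_smul, smul_eq_mul, ← hM.star_dotProduct_mulVec_comm, hMx,
          dotProduct_smul, smul_eq_mul]
    _ = a / (s * s) * (star (star u ⬝ᵥ x) * (star u ⬝ᵥ x)) := by
        rw [hux, star_mul', star_mul', ha_real, hs_real]
        field_simp

theorem eq_zero_of_forall_star_dotProduct_mulVec_self_eq_zero [DecidableEq n] {M : Matrix n n ℂ}
    (h : ∀ x, star x ⬝ᵥ M *ᵥ x = 0) : M = 0 := by
  have hsesq : ∀ x y, star x ⬝ᵥ M *ᵥ y = 0 := by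
    intro x y
    have h₁ := h (x + y)
    have h₂ := h (x + Complex.I • y)
    simp only [star_add, star_smul, mulVec_add, mulVec_smul, dotProduct_add, add_dotProduct,
      dotProduct_smul, smul_dotProduct, h x, h y, smul_eq_mul, Complex.star_def,
      Complex.conj_I] at h₁ h₂
    linear_combination (h₁ - Complex.I * h₂) / 2 +
      (star x ⬝ᵥ M *ᵥ y - star y ⬝ᵥ M *ᵥ x) / 2 * Complex.I_sq
  ext i j
  simpa using hsesq (Pi.single i 1) (Pi.single j 1)

end Matrix

theorem LinearMap.exists_apply_ne_zero_and_apply_ne_zero {K V : Type*} [Field K] [Infinite K]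
    [AddCommGroup V] [Module K V] {f g : V →ₗ[K] K} (hf : f ≠ 0) (hg : g ≠ 0) :
    ∃ v, f v ≠ 0 ∧ g v ≠ 0 := by
  by_contra! h
  obtain ⟨i, hi⟩ := Subspace.exists_eq_top_of_iUnion_eq_univ (p := ![ker f, ker g]) <|
    Set.eq_univ_of_forall fun v => by
      by_cases hv : f v = 0
      · exact Set.mem_iUnion.mpr ⟨0, by simpa using hv⟩
      · exact Set.mem_iUnion.mpr ⟨1, by simpa using h v hv⟩
  fin_cases i
  · exact hf (ker_eq_top.mp hi)
  · exact hg (ker_eq_top.mp hi)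

theorem exists_forall_eq_mul_of_slicewise {α β K : Type*} [CommMonoidWithZero K]
    [IsCancelMulZero K] {f g : α → β → K} (hk : ∀ b, ∃ k, ∀ a, f a b = k * g a b)
    (hm : ∀ a, ∃ m, ∀ b, f a b = m * g a b)
    (hconn : ∀ b b', (∃ a, g a b ≠ 0) → (∃ a, g a b' ≠ 0) → ∃ a, g a b ≠ 0 ∧ g a b' ≠ 0) :
    ∃ c, ∀ a b, f a b = c * g a b := by
  choose k hk using hk
  choose m hm using hm
  have hkm : ∀ a b, g a b ≠ 0 → k b = m a := fun a b h =>
    mul_right_cancel₀ h ((hk b a).symm.trans (hm a b))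
  by_cases h₀ : ∃ a₀ b₀, g a₀ b₀ ≠ 0
  · obtain ⟨a₀, b₀, h₀⟩ := h₀
    refine ⟨k b₀, fun a b => ?_⟩
    by_cases hab : g a b = 0
    · simp [hk b a, hab]
    · obtain ⟨a', h₁, h₂⟩ := hconn b b₀ ⟨a, hab⟩ ⟨a₀, h₀⟩
      rw [hk b a, hkm a' b h₁, hkm a' b₀ h₂]
  · push Not at h₀
    exact ⟨0, fun a b => by simp [hk b a, h₀ a b]⟩

namespace EW

section pair
variable {m n : Type*} [Fintype m] [Fintype n]

theorem pair_mulVec_mulVec (A : Matrix m m ℂ) (L L' : Matrix m n ℂ) (x y : n → ℂ) :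
    pair A (L *ᵥ x) (L' *ᵥ y) = star x ⬝ᵥ (Lᴴ * A * L') *ᵥ y := by
  rw [pair, star_mulVec, ← dotProduct_mulVec, ← mulVec_mulVec, ← mulVec_mulVec]

theorem pair_vecMulVec (ψ x y : m → ℂ) :
    pair (vecMulVec ψ (star ψ)) x y = star (star ψ ⬝ᵥ x) * (star ψ ⬝ᵥ y) := by
  rw [pair, vecMulVec_mulVec, dotProduct_smul, op_smul_eq_mul, star_dotProduct]

theorem pair_mulVec_mulVec_eq_zero_of_forall [DecidableEq n] {A : Matrix m m ℂ}
    {L L' : Matrix m n ℂ} (h : ∀ x, pair A (L *ᵥ x) (L' *ᵥ x) = 0) (x y : n → ℂ) :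
    pair A (L *ᵥ x) (L' *ᵥ y) = 0 := by
  rw [pair_mulVec_mulVec, eq_zero_of_forall_star_dotProduct_mulVec_self_eq_zero
    fun x => (pair_mulVec_mulVec A L L' x x).symm.trans (h x), zero_mulVec, dotProduct_zero]

theorem exists_pair_mulVec_eq_mul {Y : Matrix m m ℂ} (hY : Y.IsHermitian) (L : Matrix m n ℂ)
    (ψ : m → ℂ) (hpos : ∀ x, 0 ≤ pair Y (L *ᵥ x) (L *ᵥ x))
    (hzero : ∀ x, pair (vecMulVec ψ (star ψ)) (L *ᵥ x) (L *ᵥ x) = 0 →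
      pair Y (L *ᵥ x) (L *ᵥ x) = 0) :
    ∃ k, ∀ x,
      pair Y (L *ᵥ x) (L *ᵥ x) = k * pair (vecMulVec ψ (star ψ)) (L *ᵥ x) (L *ᵥ x) := by
  have hM : (Lᴴ * Y * L).PosSemidef := .of_dotProduct_mulVec_nonneg
    (isHermitian_conjTranspose_mul_mul L hY) fun x => pair_mulVec_mulVec Y L L x x ▸ hpos x
  have hu : ∀ x, star (Lᴴ *ᵥ ψ) ⬝ᵥ x = star ψ ⬝ᵥ L *ᵥ x := fun x => by
    rw [star_mulVec, conjTranspose_conjTranspose, dotProduct_mulVec]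
  obtain ⟨k, hk⟩ := hM.isHermitian.exists_forall_star_dotProduct_mulVec_eq (u := Lᴴ *ᵥ ψ)
    fun w hw => (hM.dotProduct_mulVec_zero_iff w).mp <| by
      rw [← pair_mulVec_mulVec]
      exact hzero w (by rw [pair_vecMulVec, ← hu, hw, mul_zero])
  exact ⟨k, fun x => by rw [pair_mulVec_mulVec, hk, pair_vecMulVec, hu]⟩

end pair

variable {Na Nb : ℕ}

def tensorRight (χ : Fin Nb → ℂ) : Matrix (Fin Na × Fin Nb) (Fin Na) ℂ :=
  of fun p i => if p.1 = i then χ p.2 else 0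

def tensorLeft (φ : Fin Na → ℂ) : Matrix (Fin Na × Fin Nb) (Fin Nb) ℂ :=
  of fun p j => if p.2 = j then φ p.1 else 0

theorem tensorRight_mulVec (χ : Fin Nb → ℂ) (φ : Fin Na → ℂ) :
    tensorRight χ *ᵥ φ = kron φ χ := by
  ext p
  simp [tensorRight, kron, mulVec, dotProduct, mul_comm]

theorem tensorLeft_mulVec (φ : Fin Na → ℂ) (χ : Fin Nb → ℂ) :
    tensorLeft φ *ᵥ χ = kron φ χ := by
  ext p
  simp [tensorLeft, kron, mulVec, dotProduct, mul_comm]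

theorem kron_single_s13 (i : Fin Na) (j : Fin Nb) :
    kron (Pi.single i 1) (Pi.single j 1) = Pi.single (i, j) 1 := by
  ext ⟨i', j'⟩
  simp only [kron, Pi.single_apply, Prod.mk.injEq]
  split_ifs <;> simp_all

theorem biquad_sub (A B : Mat Na Nb) (φ : Fin Na → ℂ) (χ : Fin Nb → ℂ) :
    biquad (A - B) φ χ = biquad A φ χ - biquad B φ χ := by
  simp only [biquad, pair, sub_mulVec, dotProduct_sub]

theorem biquad_add (A B : Mat Na Nb) (φ : Fin Na → ℂ) (χ : Fin Nb → ℂ) :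
    biquad (A + B) φ χ = biquad A φ χ + biquad B φ χ := by
  simp only [biquad, pair, add_mulVec, dotProduct_add]

theorem biquad_smul {R : Type*} [Monoid R] [DistribMulAction R ℂ] [IsScalarTower R ℂ ℂ]
    [SMulCommClass R ℂ ℂ] (c : R) (A : Mat Na Nb) (φ : Fin Na → ℂ) (χ : Fin Nb → ℂ) :
    biquad (c • A) φ χ = c • biquad A φ χ := by
  simp only [biquad, pair, smul_mulVec, dotProduct_smul]

theorem eq_zero_of_forall_biquad_eq_zero {A : Mat Na Nb} (h : ∀ φ χ, biquad A φ χ = 0) :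
    A = 0 := by
  have hslice : ∀ χ φ φ', pair A (kron φ χ) (kron φ' χ) = 0 := fun χ => by
    simpa only [tensorRight_mulVec] using pair_mulVec_mulVec_eq_zero_of_forall
      (L := tensorRight χ) (L' := tensorRight χ)
      (by simpa only [biquad, tensorRight_mulVec] using (h · χ))
  have hpair : ∀ φ φ' χ χ', pair A (kron φ χ) (kron φ' χ') = 0 := fun φ φ' => by
    simpa only [tensorLeft_mulVec] using pair_mulVec_mulVec_eq_zero_of_forall
      (L := tensorLeft φ) (L' := tensorLeft φ')
      (by simpa only [tensorLeft_mulVec] using (hslice · φ φ'))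
  ext ⟨i, j⟩ ⟨k, l⟩
  simpa [pair, kron_single_s13] using
    hpair (Pi.single i 1) (Pi.single k 1) (Pi.single j 1) (Pi.single l 1)

theorem eq_smul_of_forall_biquad_eq_mul {A B : Mat Na Nb} {k : ℂ}
    (h : ∀ φ χ, biquad A φ χ = k * biquad B φ χ) : A = k • B :=
  sub_eq_zero.mp <| eq_zero_of_forall_biquad_eq_zero fun φ χ => by
    rw [biquad_sub, biquad_smul, h, smul_eq_mul, sub_self]

theorem biquad_vecMulVec (ψ : Fin Na × Fin Nb → ℂ) (φ : Fin Na → ℂ) (χ : Fin Nb → ℂ) :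
    biquad (vecMulVec ψ (star ψ)) φ χ = star (star ψ ⬝ᵥ kron φ χ) * (star ψ ⬝ᵥ kron φ χ) :=
  pair_vecMulVec ψ _ _

theorem exists_biquad_vecMulVec_ne_zero_and_ne_zero (ψ : Fin Na × Fin Nb → ℂ)
    {χ χ' : Fin Nb → ℂ} (h : ∃ φ, biquad (vecMulVec ψ (star ψ)) φ χ ≠ 0)
    (h' : ∃ φ, biquad (vecMulVec ψ (star ψ)) φ χ' ≠ 0) :
    ∃ φ, biquad (vecMulVec ψ (star ψ)) φ χ ≠ 0 ∧ biquad (vecMulVec ψ (star ψ)) φ χ' ≠ 0 := by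
  let overlap (χ : Fin Nb → ℂ) : (Fin Na → ℂ) →ₗ[ℂ] ℂ :=
    dotProductBilin ℂ ℂ (star ψ) ∘ₗ (tensorRight χ).mulVecLin
  have hne : ∀ φ χ, biquad (vecMulVec ψ (star ψ)) φ χ ≠ 0 ↔ overlap χ φ ≠ 0 := fun φ χ => by
    simp [overlap, biquad_vecMulVec, tensorRight_mulVec]
  simp only [hne] at h h' ⊢
  exact LinearMap.exists_apply_ne_zero_and_apply_ne_zero (DFunLike.ne_iff.mpr (by simpa using h))
    (DFunLike.ne_iff.mpr (by simpa using h'))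

theorem IsWitness.exists_forall_biquad_eq_mul_of_zeros {Y : Mat Na Nb} (hY : IsWitness Y)
    {ψ : Fin Na × Fin Nb → ℂ}
    (h : ∀ φ χ, biquad (vecMulVec ψ (star ψ)) φ χ = 0 → biquad Y φ χ = 0) :
    ∃ k, ∀ φ χ, biquad Y φ χ = k * biquad (vecMulVec ψ (star ψ)) φ χ := by
  refine exists_forall_eq_mul_of_slicewise (fun χ => ?_) (fun φ => ?_)
    fun χ χ' => exists_biquad_vecMulVec_ne_zero_and_ne_zero ψ
  · simpa only [biquad, tensorRight_mulVec] using
      exists_pair_mulVec_eq_mul hY.1 (tensorRight χ) ψ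
      (by simpa only [biquad, tensorRight_mulVec] using (hY.2 · χ))
      (by simpa only [biquad, tensorRight_mulVec] using (h · χ))
  · simpa only [biquad, tensorLeft_mulVec] using
      exists_pair_mulVec_eq_mul hY.1 (tensorLeft φ) ψ
      (by simpa only [biquad, tensorLeft_mulVec] using hY.2 φ)
      (by simpa only [biquad, tensorLeft_mulVec] using h φ)

theorem vecMulVec_mem_witnessSet {ψ : Fin Na × Fin Nb → ℂ} (hψ : enorm ψ = 1) :
    vecMulVec ψ (star ψ) ∈ witnessSet Na Nb := by
  refine ⟨⟨?_, fun φ χ => ?_⟩, ?_⟩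
  · rw [IsHermitian, conjTranspose_vecMulVec, star_star]
  · rw [biquad_vecMulVec]
    exact star_mul_self_nonneg _
  · have hre : (star ψ ⬝ᵥ ψ).re = 1 := Real.sqrt_eq_one.mp hψ
    rw [trace_vecMulVec, dotProduct_comm,
      Complex.eq_re_of_ofReal_le (dotProduct_star_self_nonneg ψ), hre, Complex.ofReal_one]

theorem eq_of_mem_witnessSet_of_zeros {ψ : Fin Na × Fin Nb → ℂ} (hψ : enorm ψ = 1)
    {Y : Mat Na Nb} (hY : Y ∈ witnessSet Na Nb)
    (h : ∀ φ χ, biquad (vecMulVec ψ (star ψ)) φ χ = 0 → biquad Y φ χ = 0) :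
    Y = vecMulVec ψ (star ψ) := by
  obtain ⟨k, hk⟩ := hY.1.exists_forall_biquad_eq_mul_of_zeros h
  have hYk := eq_smul_of_forall_biquad_eq_mul hk
  have hk₁ : k = 1 := by
    simpa [hYk, trace_smul, (vecMulVec_mem_witnessSet hψ).2] using hY.2
  rw [hYk, hk₁, one_smul]

theorem biquad_eq_zero_of_mem_openSegment {X Y Z : Mat Na Nb} (hY : IsWitness Y)
    (hZ : IsWitness Z) (hX : X ∈ openSegment ℝ Y Z) {φ : Fin Na → ℂ} {χ : Fin Nb → ℂ}
    (h : biquad X φ χ = 0) : biquad Y φ χ = 0 := by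
  obtain ⟨a, b, ha, hb, -, rfl⟩ := hX
  rw [biquad_add, biquad_smul, biquad_smul] at h
  have := (add_eq_zero_iff_of_nonneg (smul_nonneg ha.le (hY.2 φ χ))
    (smul_nonneg hb.le (hZ.2 φ χ))).mp h
  exact (smul_eq_zero.mp this.1).resolve_left ha.ne'

theorem ptrans_ptrans (A : Mat Na Nb) : ptrans (ptrans A) = A := rfl

theorem trace_ptrans (A : Mat Na Nb) : (ptrans A).trace = A.trace := rfl

theorem isHermitian_ptrans {A : Mat Na Nb} (hA : A.IsHermitian) : (ptrans A).IsHermitian := by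
  ext p q
  exact congr_fun (congr_fun hA (p.1, q.2)) (q.1, p.2)

theorem biquad_ptrans (A : Mat Na Nb) (φ : Fin Na → ℂ) (χ : Fin Nb → ℂ) :
    biquad (ptrans A) φ χ = biquad A φ (star χ) := by
  simp only [biquad, pair, ptrans, kron, dotProduct, mulVec, Fintype.sum_prod_type, Pi.star_apply,
    star_mul', star_star, Finset.mul_sum]
  refine Finset.sum_congr rfl fun i _ => ?_
  rw [Finset.sum_comm]
  conv_rhs => rw [Finset.sum_comm]
  refine Finset.sum_congr rfl fun k _ => ?_
  rw [Finset.sum_comm]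
  exact Finset.sum_congr rfl fun _ _ => Finset.sum_congr rfl fun _ _ => by ring

theorem ptrans_mem_witnessSet {A : Mat Na Nb} (hA : A ∈ witnessSet Na Nb) :
    ptrans A ∈ witnessSet Na Nb :=
  ⟨⟨isHermitian_ptrans hA.1.1, fun φ χ => biquad_ptrans A φ χ ▸ hA.1.2 φ (star χ)⟩,
    (trace_ptrans A).trans hA.2⟩

def ptransEquiv (Na Nb : ℕ) : Mat Na Nb ≃ₗ[ℝ] Mat Na Nb :=
  .ofInvolutive { toFun := ptrans, map_add' _ _ := rfl, map_smul' _ _ := rfl } ptrans_ptrans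

theorem image_ptransEquiv_witnessSet :
    ptransEquiv Na Nb '' witnessSet Na Nb = witnessSet Na Nb :=
  Set.Subset.antisymm (Set.image_subset_iff.mpr fun _ => ptrans_mem_witnessSet)
    fun A hA => ⟨ptrans A, ptrans_mem_witnessSet hA, ptrans_ptrans A⟩

theorem ptrans_mem_extremePoints_witnessSet {A : Mat Na Nb}
    (hA : A ∈ Set.extremePoints ℝ (witnessSet Na Nb)) :
    ptrans A ∈ Set.extremePoints ℝ (witnessSet Na Nb) := by
  rw [← image_ptransEquiv_witnessSet, ← image_extremePoints]
  exact ⟨A, hA, rfl⟩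

end EW

open EW
theorem pure_state_extremal (Na Nb : ℕ) (ψ : Fin Na × Fin Nb → ℂ) (hψ : EW.enorm ψ = 1) :
    Matrix.vecMulVec ψ (star ψ) ∈ Set.extremePoints ℝ (witnessSet Na Nb) ∧
    ptrans (Matrix.vecMulVec ψ (star ψ)) ∈ Set.extremePoints ℝ (witnessSet Na Nb) := by
  have hext : vecMulVec ψ (star ψ) ∈ Set.extremePoints ℝ (witnessSet Na Nb) :=
    ⟨vecMulVec_mem_witnessSet hψ, fun _ hY _ hZ hP => eq_of_mem_witnessSet_of_zeros hψ hY
      fun _ _ => biquad_eq_zero_of_mem_openSegment hY.1 hZ.1 hP⟩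
  exact ⟨hext, ptrans_mem_extremePoints_witnessSet hext⟩
end
end

section
/- Dual sets are exposed faces: (1) for every nonempty X ⊆ S₁, the set X° = {Ω ∈ S₁° | Tr(Ωρ) = 0 for all ρ ∈ X} is a face of S₁° (IsExtreme ℝ S₁° X°), and there exists ρ₀ ∈ convexHull ℝ X such that X° = {Ω ∈ S₁° | Tr(Ωρ₀) = 0}; (2) dually, for every nonempty Y ⊆ S₁°, the set Y° = {ρ ∈ S₁ | Tr(Ωρ) = 0 for all Ω ∈ Y} is a face of S₁ (IsExtreme ℝ S₁ Y°), and there exists Ω₀ ∈ convexHull ℝ Y such that Y° = {ρ ∈ S₁ | Tr(Ω₀ρ) = 0}. -/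
open Matrix
open scoped ComplexOrder

noncomputable section

open EW

/-! The trace pairing `(Ω, ρ) ↦ Tr(Ωρ)` is nonnegative on `S₁° × S₁`: a witness is nonnegative on
pure product states, hence on their convex hull. For any pairing nonnegative on `A × B`, the zero
set in `A` of one point of `B` is a face of `A`, since a positive combination of nonnegative values
vanishes only if both values do. The common zero set of a nonempty `X ⊆ B` is that of the
barycentre of a finite subset of `X` spanning `X`: nonnegative terms with zero sum all vanish, and
linearity carries the vanishing over to the span. -/

theorem exists_finset_subset_subset_span {K E : Type*} [DivisionRing K] [AddCommGroup E]
    [Module K E] [FiniteDimensional K E] {X : Set E} (hX : X.Nonempty) :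
    ∃ T : Finset E, T.Nonempty ∧ ↑T ⊆ X ∧ X ⊆ Submodule.span K (T : Set E) := by
  obtain ⟨x, hx⟩ := hX
  obtain ⟨t, htX, -, hspan, -⟩ := Submodule.exists_finset_span_eq_linearIndepOn K X
  classical
  refine ⟨insert x t, Finset.insert_nonempty x t, ?_, ?_⟩
  · rw [Finset.coe_insert]
    exact Set.insert_subset hx htX
  · rw [Finset.coe_insert]
    intro y hy
    have hyt : y ∈ Submodule.span K (t : Set E) := hspan ▸ Submodule.subset_span hy
    exact Submodule.span_mono (Set.subset_insert x _) hyt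

section PairingFaces

variable {E M : Type*} [AddCommGroup E] [Module ℝ E]
  [AddCommGroup M] [PartialOrder M] [IsOrderedAddMonoid M] [Module ℝ M]

theorem LinearMap.nonneg_of_mem_convexHull [PosSMulMono ℝ M] (g : E →ₗ[ℝ] M) {s : Set E}
    (hs : ∀ x ∈ s, 0 ≤ g x) {x : E} (hx : x ∈ convexHull ℝ s) : 0 ≤ g x :=
  convexHull_min (fun y hy => hs y hy) ((convex_Ici 0).linear_preimage g) hx

theorem isExtreme_setOf_eq_zero [PosSMulMono ℝ M] (g : E →ₗ[ℝ] M) {A : Set E}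
    (hg : ∀ a ∈ A, 0 ≤ g a) : IsExtreme ℝ A {a ∈ A | g a = 0} := by
  refine ⟨Set.sep_subset _ _, ?_⟩
  rintro x₁ hx₁ x₂ hx₂ - ⟨-, hzero⟩ ⟨s, t, hs, ht, -, rfl⟩
  have hsum : s • g x₁ + t • g x₂ = 0 := by simpa using hzero
  obtain ⟨h₁, -⟩ := (add_eq_zero_iff_of_nonneg (smul_nonneg hs.le (hg x₁ hx₁))
    (smul_nonneg ht.le (hg x₂ hx₂))).1 hsum
  exact ⟨hx₁, (smul_eq_zero.1 h₁).resolve_left hs.ne'⟩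

theorem exists_mem_convexHull_setOf_forall_eq_zero [FiniteDimensional ℝ E]
    (f : E →ₗ[ℝ] E →ₗ[ℝ] M) {A X : Set E} (hpos : ∀ a ∈ A, ∀ x ∈ X, 0 ≤ f a x)
    (hX : X.Nonempty) :
    ∃ x₀ ∈ convexHull ℝ X, {a ∈ A | ∀ x ∈ X, f a x = 0} = {a ∈ A | f a x₀ = 0} := by
  obtain ⟨T, hTne, hTX, hXT⟩ := exists_finset_subset_subset_span (K := ℝ) hX
  refine ⟨T.centerMass (fun _ => (1 : ℝ)) id,
    T.centerMass_mem_convexHull (fun _ _ => zero_le_one) (by simpa using hTne) hTX, ?_⟩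
  have hcard : (T.card : ℝ)⁻¹ ≠ 0 := inv_ne_zero (Nat.cast_ne_zero.2 hTne.card_pos.ne')
  refine Set.sep_ext_iff.2 fun a ha => ?_
  have hval : f a (T.centerMass (fun _ => (1 : ℝ)) id) = (T.card : ℝ)⁻¹ • ∑ y ∈ T, f a y := by
    simp [Finset.centerMass]
  rw [hval, smul_eq_zero_iff_right hcard,
    Finset.sum_eq_zero_iff_of_nonneg fun y hy => hpos a ha y (hTX hy)]
  refine ⟨fun h y hy => h y (hTX hy), fun h x hx => ?_⟩
  have hker : Submodule.span ℝ (T : Set E) ≤ LinearMap.ker (f a) :=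
    Submodule.span_le.2 fun y hy => h y hy
  exact hker (hXT hx)

theorem isExtreme_and_exposed_of_pairing_nonneg [FiniteDimensional ℝ E] [PosSMulMono ℝ M]
    (f : E →ₗ[ℝ] E →ₗ[ℝ] M) {A X : Set E} (hpos : ∀ a ∈ A, ∀ x ∈ X, 0 ≤ f a x)
    (hX : X.Nonempty) :
    IsExtreme ℝ A {a ∈ A | ∀ x ∈ X, f a x = 0} ∧
      ∃ x₀ ∈ convexHull ℝ X, {a ∈ A | ∀ x ∈ X, f a x = 0} = {a ∈ A | f a x₀ = 0} := by
  obtain ⟨x₀, hx₀, hexp⟩ := exists_mem_convexHull_setOf_forall_eq_zero f hpos hX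
  refine ⟨?_, x₀, hx₀, hexp⟩
  rw [hexp]
  exact isExtreme_setOf_eq_zero (f.flip x₀) fun a ha =>
    (f a).nonneg_of_mem_convexHull (hpos a ha) hx₀

end PairingFaces

namespace EW

variable {Na Nb : ℕ}

def traceForm (Na Nb : ℕ) : Mat Na Nb →ₗ[ℝ] Mat Na Nb →ₗ[ℝ] ℂ :=
  (LinearMap.mul ℝ (Mat Na Nb)).compr₂ (Matrix.traceLinearMap _ ℝ ℂ)

theorem traceForm_apply (Ω ρ : Mat Na Nb) : traceForm Na Nb Ω ρ = (Ω * ρ).trace := rfl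

theorem trace_mul_vecMulVec_star (A : Mat Na Nb) (v : Fin Na × Fin Nb → ℂ) :
    (A * vecMulVec v (star v)).trace = pair A v v := by
  rw [mul_vecMulVec, trace_vecMulVec, dotProduct_comm]
  rfl

theorem trace_mul_nonneg {Ω ρ : Mat Na Nb}
    (hΩ : Ω ∈ witnessSet Na Nb) (hρ : ρ ∈ sepSet Na Nb) : 0 ≤ (Ω * ρ).trace := by
  refine (traceForm Na Nb Ω).nonneg_of_mem_convexHull ?_ hρ
  rintro _ ⟨φ, χ, -, rfl⟩
  rw [traceForm_apply, trace_mul_vecMulVec_star]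
  exact hΩ.1.2 φ χ

end EW

theorem dual_sets_are_exposed_faces (Na Nb : ℕ) :
    (∀ X : Set (Mat Na Nb), X.Nonempty → X ⊆ sepSet Na Nb →
      IsExtreme ℝ (witnessSet Na Nb)
        {Ω ∈ witnessSet Na Nb | ∀ ρ ∈ X, (Ω * ρ).trace = 0} ∧
      ∃ ρ₀ ∈ convexHull ℝ X,
        {Ω ∈ witnessSet Na Nb | ∀ ρ ∈ X, (Ω * ρ).trace = 0} =
        {Ω ∈ witnessSet Na Nb | (Ω * ρ₀).trace = 0}) ∧
    (∀ Y : Set (Mat Na Nb), Y.Nonempty → Y ⊆ witnessSet Na Nb →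
      IsExtreme ℝ (sepSet Na Nb)
        {ρ ∈ sepSet Na Nb | ∀ Ω ∈ Y, (Ω * ρ).trace = 0} ∧
      ∃ Ω₀ ∈ convexHull ℝ Y,
        {ρ ∈ sepSet Na Nb | ∀ Ω ∈ Y, (Ω * ρ).trace = 0} =
        {ρ ∈ sepSet Na Nb | (Ω₀ * ρ).trace = 0}) :=
  ⟨fun _ hX hXsep => isExtreme_and_exposed_of_pairing_nonneg (traceForm Na Nb)
      (fun _ hΩ _ hρ => trace_mul_nonneg hΩ (hXsep hρ)) hX,
    fun _ hY hYwit => isExtreme_and_exposed_of_pairing_nonneg (traceForm Na Nb).flip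
      (fun _ hρ _ hΩ => trace_mul_nonneg (hYwit hΩ) hρ) hY⟩
end
end

section
/- An exposed face of S₁ is the dual of a witness: let Λ be a Hermitian matrix with trace 1 and let F = {ρ ∈ S₁ | Tr(Λρ) = 0}. If F is a face of S₁ (IsExtreme ℝ S₁ F), then Λ is an entanglement witness, i.e. f_Λ(φ,χ) ≥ 0 for all φ, χ (equivalently Tr(Λρ) ≥ 0 for all ρ ∈ S₁). -/
open Matrix
open scoped ComplexOrder

noncomputable section

open EW

/-!
If `f_Λ(φ,χ) < 0` somewhere, the corresponding pure product state `ρ₋` has `Tr(Λρ₋) < 0`, while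
`Tr Λ = 1 = ∑ₚ Λₚₚ` produces a basis product state `σ` with `Tr(Λσ) > 0`. As `Λ` and all of `S₁`
are Hermitian, `ρ ↦ Tr(Λρ)` is a real linear functional on `S₁`, so it vanishes at some point of
the open segment `(ρ₋, σ)`; that point lies in `F`, and `F` being a face forces `ρ₋ ∈ F`,
contradicting `Tr(Λρ₋) < 0`.
-/

theorem nonneg_of_isExtreme_zero_level {𝕜 E : Type*} [Field 𝕜] [LinearOrder 𝕜]
    [IsStrictOrderedRing 𝕜] [AddCommGroup E] [Module 𝕜 E] {K : Set E} (hK : Convex 𝕜 K)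
    (ℓ : E →ₗ[𝕜] 𝕜) (hF : IsExtreme 𝕜 K {x ∈ K | ℓ x = 0}) {y : E} (hy : y ∈ K)
    (hℓy : 0 < ℓ y) {x : E} (hx : x ∈ K) : 0 ≤ ℓ x := by
  by_contra! hℓx
  have hgap : 0 < ℓ y - ℓ x := by linarith
  set z := (ℓ y / (ℓ y - ℓ x)) • x + (-ℓ x / (ℓ y - ℓ x)) • y
  have hz : z ∈ openSegment 𝕜 x y :=
    ⟨_, _, div_pos hℓy hgap, div_pos (neg_pos.mpr hℓx) hgap, by field_simp; ring, rfl⟩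
  have hℓz : ℓ z = 0 := by
    simp only [z, map_add, map_smul, smul_eq_mul]
    field_simp
    ring
  have hxF : x ∈ {x ∈ K | ℓ x = 0} :=
    hF.left_mem_of_mem_openSegment hx hy ⟨hK.openSegment_subset hx hy hz, hℓz⟩ hz
  exact hℓx.ne hxF.2

theorem Matrix.IsHermitian.im_trace_mul {n : Type*} [Fintype n] {A B : Matrix n n ℂ}
    (hA : A.IsHermitian) (hB : B.IsHermitian) : (A * B).trace.im = 0 := by
  rw [← Complex.conj_eq_iff_im, ← Complex.star_def, ← trace_conjTranspose, conjTranspose_mul,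
    hA.eq, hB.eq, trace_mul_comm]

namespace EW

section Vectors

variable {n : Type*} [Fintype n]

theorem enorm_pos {x : n → ℂ} (hx : x ≠ 0) : 0 < enorm x :=
  Real.sqrt_pos.mpr (Complex.pos_iff.mp (Matrix.dotProduct_star_self_pos_iff.mpr hx)).1

theorem enorm_smul (s : ℝ) (x : n → ℂ) : enorm (s • x) = |s| * enorm x := by
  rw [EW.enorm, EW.enorm, star_smul, star_trivial, smul_dotProduct, dotProduct_smul, smul_smul,
    Complex.smul_re, smul_eq_mul, Real.sqrt_mul (mul_self_nonneg s), Real.sqrt_mul_self_eq_abs]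

end Vectors

theorem kron_smul_left_s15 {Na Nb : ℕ} (s : ℝ) (φ : Fin Na → ℂ) (χ : Fin Nb → ℂ) :
    kron (s • φ) χ = s • kron φ χ :=
  funext fun _ => smul_mul_assoc s _ _

theorem kron_single_one {Na Nb : ℕ} (p : Fin Na × Fin Nb) :
    kron (Pi.single p.1 (1 : ℂ)) (Pi.single p.2 1) = Pi.single p 1 := by
  funext q
  by_cases h₁ : q.1 = p.1 <;> by_cases h₂ : q.2 = p.2 <;>
    simp [kron, Pi.single_apply, h₁, h₂, Prod.ext_iff]

section Separable

variable {Na Nb : ℕ}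

theorem isHermitian_of_mem_sepSet {ρ : Mat Na Nb} (hρ : ρ ∈ sepSet Na Nb) : ρ.IsHermitian := by
  refine convexHull_min (t := {A : Mat Na Nb | A.IsHermitian}) ?_
    (fun A hA B hB a b _ _ _ => ?_) hρ
  · rintro _ ⟨φ, χ, -, rfl⟩
    exact (posSemidef_vecMulVec_self_star _).isHermitian
  · exact ((hA : A.IsHermitian).smul (.all a)).add ((hB : B.IsHermitian).smul (.all b))

theorem exists_pos_smul_mem_sepSet {φ : Fin Na → ℂ} {χ : Fin Nb → ℂ} (h : kron φ χ ≠ 0) :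
    ∃ r : ℝ, 0 < r ∧ r • vecMulVec (kron φ χ) (star (kron φ χ)) ∈ sepSet Na Nb := by
  set s := (enorm (kron φ χ))⁻¹
  have hs : 0 < s := inv_pos.mpr (enorm_pos h)
  refine ⟨s * s, mul_pos hs hs, subset_convexHull ℝ _ ⟨s • φ, χ, ?_, ?_⟩⟩
  · rw [kron_smul_left_s15, enorm_smul, abs_of_pos hs, inv_mul_cancel₀ (enorm_pos h).ne']
  · rw [kron_smul_left_s15, star_smul, star_trivial s, smul_vecMulVec, vecMulVec_smul, smul_smul]

end Separable

section TraceFunctional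

variable {n : Type*} [Fintype n]

def reTraceMul (Λ : Matrix n n ℂ) : Matrix n n ℂ →ₗ[ℝ] ℝ :=
  Complex.reLm ∘ₗ traceLinearMap n ℝ ℂ ∘ₗ LinearMap.mulLeft ℝ Λ

@[simp]
theorem reTraceMul_apply (Λ ρ : Matrix n n ℂ) : reTraceMul Λ ρ = (Λ * ρ).trace.re :=
  rfl

theorem reTraceMul_vecMulVec (Λ : Matrix n n ℂ) (x : n → ℂ) :
    reTraceMul Λ (vecMulVec x (star x)) = (pair Λ x x).re := by
  rw [reTraceMul_apply, mul_vecMulVec, trace_vecMulVec, dotProduct_comm, pair]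

end TraceFunctional

section Witness

variable {Na Nb : ℕ} {Λ : Mat Na Nb}

theorem exists_mem_sepSet_reTraceMul_pos (htr : Λ.trace = 1) :
    ∃ ρ ∈ sepSet Na Nb, 0 < reTraceMul Λ ρ := by
  have hsum : ∑ _p : Fin Na × Fin Nb, (0 : ℝ) < ∑ p, (Λ p p).re := by
    rw [Finset.sum_const_zero, ← Complex.re_sum, show ∑ p, Λ p p = 1 from htr, Complex.one_re]
    exact one_pos
  obtain ⟨p, -, hp⟩ := Finset.exists_lt_of_sum_lt hsum
  have hne : kron (Pi.single p.1 (1 : ℂ)) (Pi.single p.2 1) ≠ 0 := by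
    rw [kron_single_one]
    exact Pi.single_ne_zero_iff.mpr one_ne_zero
  obtain ⟨r, hr, hmem⟩ := exists_pos_smul_mem_sepSet hne
  refine ⟨_, hmem, ?_⟩
  rw [map_smul, reTraceMul_vecMulVec, kron_single_one, smul_eq_mul]
  simpa [pair] using mul_pos hr hp

theorem biquad_nonneg_of_reTraceMul_nonneg (hΛ : Λ.IsHermitian)
    (h : ∀ ρ ∈ sepSet Na Nb, 0 ≤ reTraceMul Λ ρ) (φ : Fin Na → ℂ) (χ : Fin Nb → ℂ) :
    0 ≤ biquad Λ φ χ := by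
  refine Complex.nonneg_iff.mpr ⟨?_, (hΛ.im_star_dotProduct_mulVec_self _).symm⟩
  by_cases hzero : kron φ χ = 0
  · simp [biquad, pair, hzero]
  obtain ⟨r, hr, hmem⟩ := exists_pos_smul_mem_sepSet hzero
  have hρ := h _ hmem
  rw [map_smul, reTraceMul_vecMulVec, smul_eq_mul] at hρ
  exact nonneg_of_mul_nonneg_right hρ hr

end Witness

end EW

theorem exposed_face_dual_to_witness_general (Na Nb : ℕ)
    (Λ : Mat Na Nb) (hH : Λ.IsHermitian) (htr : Λ.trace = 1)
    (hface : IsExtreme ℝ (sepSet Na Nb) {ρ ∈ sepSet Na Nb | (Λ * ρ).trace = 0}) :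
    ∀ φ χ, 0 ≤ biquad Λ φ χ := by
  have hF : {ρ ∈ sepSet Na Nb | (Λ * ρ).trace = 0} =
      {ρ ∈ sepSet Na Nb | reTraceMul Λ ρ = 0} :=
    Set.ext fun ρ => and_congr_right fun hρ => by
      rw [Complex.ext_iff, hH.im_trace_mul (isHermitian_of_mem_sepSet hρ)]
      simp
  obtain ⟨σ, hσ, hpos⟩ := exists_mem_sepSet_reTraceMul_pos htr
  refine biquad_nonneg_of_reTraceMul_nonneg hH fun ρ hρ => ?_
  exact nonneg_of_isExtreme_zero_level (convex_convexHull ℝ _) _ (hF ▸ hface) hσ hpos hρ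

theorem exposed_face_dual_to_witness (Na Nb : ℕ) (hNa : 1 ≤ Na) (hNb : 1 ≤ Nb)
    (Λ : Mat Na Nb) (hH : Λ.IsHermitian) (htr : Λ.trace = 1)
    (hface : IsExtreme ℝ (sepSet Na Nb) {ρ ∈ sepSet Na Nb | (Λ * ρ).trace = 0}) :
    ∀ φ χ, 0 ≤ biquad Λ φ χ :=
  exposed_face_dual_to_witness_general Na Nb Λ hH htr hface
end
end
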